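/- Let (P, Q) be a smooth solution of the T³ Gowdy system. Then the quantity J(τ) = ∫₀^{2π} [ ∂τP(τ,θ) ∂θP(τ,θ) + e^{2P(τ,θ)} ∂τQ(τ,θ) ∂θQ(τ,θ) ] dθ is constant in τ. In particular, if the Gowdy integrability condition J(0) = 0 holds at τ = 0, it holds for all τ. -/

import Mathlib

open Real




noncomputable def pd1 (h : ℝ × ℝ → ℝ) (p : ℝ × ℝ) : ℝ := fderiv ℝ h p (1, 0)
noncomputable def pd2 (h : ℝ × ℝ → ℝ) (p : ℝ × ℝ) : ℝ := fderiv ℝ h p (0, 1)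

lemma pd1_hasDerivAt (h : ℝ × ℝ → ℝ) (hh : Differentiable ℝ h) (τ θ : ℝ) :
    HasDerivAt (fun s => h (s, θ)) (pd1 h (τ, θ)) τ := by
  have h1 : HasDerivAt (fun s : ℝ => (s, θ)) ((1 : ℝ), (0 : ℝ)) τ :=
    (hasDerivAt_id τ).prodMk (hasDerivAt_const τ θ)
  simpa [Function.comp_def, pd1] using (hh (τ, θ)).hasFDerivAt.comp_hasDerivAt τ h1

lemma pd2_hasDerivAt (h : ℝ × ℝ → ℝ) (hh : Differentiable ℝ h) (τ θ : ℝ) :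
    HasDerivAt (fun t => h (τ, t)) (pd2 h (τ, θ)) θ := by
  have h1 : HasDerivAt (fun t : ℝ => (τ, t)) ((0 : ℝ), (1 : ℝ)) θ :=
    (hasDerivAt_const θ τ).prodMk (hasDerivAt_id θ)
  simpa [Function.comp_def, pd2] using (hh (τ, θ)).hasFDerivAt.comp_hasDerivAt θ h1

lemma pd1_contDiff (h : ℝ × ℝ → ℝ) (hh : ContDiff ℝ (⊤ : ℕ∞) h) : ContDiff ℝ (⊤ : ℕ∞) (pd1 h) :=
  (hh.fderiv_right (by simp)).clm_apply contDiff_const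

lemma pd2_contDiff (h : ℝ × ℝ → ℝ) (hh : ContDiff ℝ (⊤ : ℕ∞) h) : ContDiff ℝ (⊤ : ℕ∞) (pd2 h) :=
  (hh.fderiv_right (by simp)).clm_apply contDiff_const

lemma pd_comm (h : ℝ × ℝ → ℝ) (hh : ContDiff ℝ (⊤ : ℕ∞) h) (p : ℝ × ℝ) :
    pd2 (pd1 h) p = pd1 (pd2 h) p := by
  have hd : Differentiable ℝ h := hh.differentiable (by simp)
  have h' : ContDiff ℝ (⊤ : ℕ∞) (fderiv ℝ h) := hh.fderiv_right (by simp)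
  have h'' : HasFDerivAt (fderiv ℝ h) (fderiv ℝ (fderiv ℝ h) p) p :=
    (h'.differentiable (by simp) p).hasFDerivAt
  have hs := second_derivative_symmetric (fun y => (hd y).hasFDerivAt) h''
  have e1 : HasFDerivAt (pd1 h)
      ((ContinuousLinearMap.apply ℝ ℝ ((1 : ℝ), (0 : ℝ))).comp (fderiv ℝ (fderiv ℝ h) p)) p :=
    (ContinuousLinearMap.apply ℝ ℝ ((1 : ℝ), (0 : ℝ))).hasFDerivAt.comp p h''
  have e2 : HasFDerivAt (pd2 h)
      ((ContinuousLinearMap.apply ℝ ℝ ((0 : ℝ), (1 : ℝ))).comp (fderiv ℝ (fderiv ℝ h) p)) p :=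
    (ContinuousLinearMap.apply ℝ ℝ ((0 : ℝ), (1 : ℝ))).hasFDerivAt.comp p h''
  have : pd2 (pd1 h) p = fderiv ℝ (fderiv ℝ h) p (0, 1) (1, 0) := by
    simp [pd2, e1.fderiv]
  rw [this]
  have : pd1 (pd2 h) p = fderiv ℝ (fderiv ℝ h) p (1, 0) (0, 1) := by
    simp [pd1, e2.fderiv]
  rw [this]
  exact hs _ _


noncomputable def GG (f g : ℝ × ℝ → ℝ) (p : ℝ × ℝ) : ℝ :=
  pd1 f p * pd2 f p + Real.exp (2 * f p) * pd1 g p * pd2 g p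

noncomputable def FF (f g : ℝ × ℝ → ℝ) (p : ℝ × ℝ) : ℝ :=
  (pd1 f p ^ 2 + Real.exp (-2 * p.1) * pd2 f p ^ 2 + Real.exp (2 * f p) * pd1 g p ^ 2
    + Real.exp (-2 * p.1) * Real.exp (2 * f p) * pd2 g p ^ 2) / 2

noncomputable def AA (f g : ℝ × ℝ → ℝ) (p : ℝ × ℝ) : ℝ :=
  pd1 (pd1 f) p * pd2 f p + pd1 f p * pd1 (pd2 f) p
    + Real.exp (2 * f p) * (2 * pd1 f p * pd1 g p * pd2 g p
        + pd1 (pd1 g) p * pd2 g p + pd1 g p * pd1 (pd2 g) p)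

noncomputable def BB (f g : ℝ × ℝ → ℝ) (p : ℝ × ℝ) : ℝ :=
  pd1 f p * pd2 (pd1 f) p + Real.exp (-2 * p.1) * pd2 f p * pd2 (pd2 f) p
    + Real.exp (2 * f p) * (pd2 f p * pd1 g p ^ 2 + pd1 g p * pd2 (pd1 g) p)
    + Real.exp (-2 * p.1) * Real.exp (2 * f p) * (pd2 f p * pd2 g p ^ 2 + pd2 g p * pd2 (pd2 g) p)

section
variable (f g : ℝ × ℝ → ℝ) (hf : ContDiff ℝ (⊤ : ℕ∞) f) (hg : ContDiff ℝ (⊤ : ℕ∞) g)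

include hf hg in
lemma GG_contDiff : ContDiff ℝ (⊤ : ℕ∞) (GG f g) :=
  ((pd1_contDiff f hf).mul (pd2_contDiff f hf)).add
    ((((contDiff_const.mul hf).exp).mul (pd1_contDiff g hg)).mul (pd2_contDiff g hg))

include hf hg in
lemma FF_contDiff : ContDiff ℝ (⊤ : ℕ∞) (FF f g) := by
  have hc : ContDiff ℝ (⊤ : ℕ∞) fun p : ℝ × ℝ => Real.exp (-2 * p.1) :=
    (contDiff_const.mul contDiff_fst).exp
  exact ((((pd1_contDiff f hf).pow 2).add
      (hc.mul ((pd2_contDiff f hf).pow 2))).add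
      (((contDiff_const.mul hf).exp).mul ((pd1_contDiff g hg).pow 2)) |>.add
      ((hc.mul ((contDiff_const.mul hf).exp)).mul ((pd2_contDiff g hg).pow 2))).div_const 2

include hf hg in
lemma AA_contDiff : ContDiff ℝ (⊤ : ℕ∞) (AA f g) := by
  unfold AA
  exact (((pd1_contDiff _ (pd1_contDiff f hf)).mul (pd2_contDiff f hf)).add
      ((pd1_contDiff f hf).mul (pd1_contDiff _ (pd2_contDiff f hf)))).add
    (((contDiff_const.mul hf).exp).mul
      ((((contDiff_const.mul (pd1_contDiff f hf)).mul (pd1_contDiff g hg)).mul (pd2_contDiff g hg)).add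
        ((pd1_contDiff _ (pd1_contDiff g hg)).mul (pd2_contDiff g hg)) |>.add
        ((pd1_contDiff g hg).mul (pd1_contDiff _ (pd2_contDiff g hg)))))

include hf hg in
lemma BB_contDiff : ContDiff ℝ (⊤ : ℕ∞) (BB f g) := by
  unfold BB
  have hc : ContDiff ℝ (⊤ : ℕ∞) fun p : ℝ × ℝ => Real.exp (-2 * p.1) :=
    (contDiff_const.mul contDiff_fst).exp
  have he : ContDiff ℝ (⊤ : ℕ∞) fun p : ℝ × ℝ => Real.exp (2 * f p) := (contDiff_const.mul hf).exp
  exact ((((pd1_contDiff f hf).mul (pd2_contDiff _ (pd1_contDiff f hf))).add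
      ((hc.mul (pd2_contDiff f hf)).mul (pd2_contDiff _ (pd2_contDiff f hf)))).add
      (he.mul (((pd2_contDiff f hf).mul ((pd1_contDiff g hg).pow 2)).add
        ((pd1_contDiff g hg).mul (pd2_contDiff _ (pd1_contDiff g hg)))))).add
      ((hc.mul he).mul (((pd2_contDiff f hf).mul ((pd2_contDiff g hg).pow 2)).add
        ((pd2_contDiff g hg).mul (pd2_contDiff _ (pd2_contDiff g hg)))))

include hf hg in
lemma GG_deriv1 (τ θ : ℝ) : HasDerivAt (fun s => GG f g (s, θ)) (AA f g (τ, θ)) τ := by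
  have h0 := pd1_hasDerivAt f (hf.differentiable (by simp)) τ θ
  have hexp : HasDerivAt (fun s => Real.exp (2 * f (s, θ)))
      (Real.exp (2 * f (τ, θ)) * (2 * pd1 f (τ, θ))) τ := (h0.const_mul 2).exp
  have hbig := ((pd1_hasDerivAt (pd1 f) ((pd1_contDiff f hf).differentiable (by simp)) τ θ).mul
      (pd1_hasDerivAt (pd2 f) ((pd2_contDiff f hf).differentiable (by simp)) τ θ)).add
    ((hexp.mul (pd1_hasDerivAt (pd1 g) ((pd1_contDiff g hg).differentiable (by simp)) τ θ)).mul
      (pd1_hasDerivAt (pd2 g) ((pd2_contDiff g hg).differentiable (by simp)) τ θ))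
  have : HasDerivAt (fun s => GG f g (s, θ)) _ τ := hbig
  convert this using 1
  unfold AA
  simp only [Pi.mul_apply, Pi.pow_apply, Pi.add_apply]
  ring

include hf hg in
lemma FF_deriv2 (τ θ : ℝ) : HasDerivAt (fun t => FF f g (τ, t)) (BB f g (τ, θ)) θ := by
  have h0 := pd2_hasDerivAt f (hf.differentiable (by simp)) τ θ
  have hexp : HasDerivAt (fun t => Real.exp (2 * f (τ, t)))
      (Real.exp (2 * f (τ, θ)) * (2 * pd2 f (τ, θ))) θ := (h0.const_mul 2).exp
  have hbig := (((((pd2_hasDerivAt (pd1 f) ((pd1_contDiff f hf).differentiable (by simp)) τ θ).pow 2).add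
      (((pd2_hasDerivAt (pd2 f) ((pd2_contDiff f hf).differentiable (by simp)) τ θ).pow 2).const_mul
        (Real.exp (-2 * τ)))).add
      (hexp.mul ((pd2_hasDerivAt (pd1 g) ((pd1_contDiff g hg).differentiable (by simp)) τ θ).pow 2))).add
      ((hexp.const_mul (Real.exp (-2 * τ))).mul
        ((pd2_hasDerivAt (pd2 g) ((pd2_contDiff g hg).differentiable (by simp)) τ θ).pow 2))).div_const 2
  have : HasDerivAt (fun t => FF f g (τ, t)) _ θ := hbig
  convert this using 1
  unfold BB
  simp only [Pi.mul_apply, Pi.pow_apply, Pi.add_apply]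
  ring

include hf hg in
lemma AA_eq_BB
    (hfw : ∀ p : ℝ × ℝ, pd1 (pd1 f) p = Real.exp (-2 * p.1) * pd2 (pd2 f) p
      + Real.exp (2 * f p) * (pd1 g p ^ 2 - Real.exp (-2 * p.1) * pd2 g p ^ 2))
    (hgw : ∀ p : ℝ × ℝ, pd1 (pd1 g) p = Real.exp (-2 * p.1) * pd2 (pd2 g) p
      - 2 * (pd1 f p * pd1 g p - Real.exp (-2 * p.1) * pd2 f p * pd2 g p))
    (p : ℝ × ℝ) : AA f g p = BB f g p := by
  unfold AA BB
  rw [hfw, hgw, ← pd_comm f hf, ← pd_comm g hg]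
  ring
end


/-- For smooth solutions of the T³ Gowdy system, the quantity
`J(τ) = ∫₀^{2π} (∂τP ∂θP + e^{2P} ∂τQ ∂θQ) dθ` is conserved; in particular the
Gowdy integrability condition propagates from `τ = 0` to all `τ`. -/
theorem gowdy_integrability_conserved
    (P Q : ℝ → ℝ → ℝ)
    (hPsmooth : ContDiff ℝ (⊤ : ℕ∞) (fun p : ℝ × ℝ => P p.1 p.2))
    (hQsmooth : ContDiff ℝ (⊤ : ℕ∞) (fun p : ℝ × ℝ => Q p.1 p.2))
    (hPper : ∀ τ θ : ℝ, P τ (θ + 2 * π) = P τ θ)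
    (hQper : ∀ τ θ : ℝ, Q τ (θ + 2 * π) = Q τ θ)
    (hPwave : ∀ τ θ : ℝ, deriv (fun s => deriv (fun s' => P s' θ) s) τ
      = Real.exp (-2 * τ) * deriv (deriv (P τ)) θ
        + Real.exp (2 * P τ θ) * ((deriv (fun s => Q s θ) τ) ^ 2
          - Real.exp (-2 * τ) * (deriv (Q τ) θ) ^ 2))
    (hQwave : ∀ τ θ : ℝ, deriv (fun s => deriv (fun s' => Q s' θ) s) τ
      = Real.exp (-2 * τ) * deriv (deriv (Q τ)) θ
        - 2 * (deriv (fun s => P s θ) τ * deriv (fun s => Q s θ) τ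
          - Real.exp (-2 * τ) * deriv (P τ) θ * deriv (Q τ) θ))
    (J : ℝ → ℝ)
    (hJ : ∀ τ : ℝ, J τ = ∫ θ in (0:ℝ)..(2 * π),
      (deriv (fun s => P s θ) τ * deriv (P τ) θ
        + Real.exp (2 * P τ θ) * deriv (fun s => Q s θ) τ * deriv (Q τ) θ)) :
    (∀ τ₁ τ₂ : ℝ, J τ₁ = J τ₂) ∧ (J 0 = 0 → ∀ τ : ℝ, J τ = 0) := by
  set f : ℝ × ℝ → ℝ := fun p => P p.1 p.2 with f_def
  set g : ℝ × ℝ → ℝ := fun p => Q p.1 p.2 with g_def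
  have hfs : ContDiff ℝ (⊤ : ℕ∞) f := hPsmooth
  have hgs : ContDiff ℝ (⊤ : ℕ∞) g := hQsmooth
  have hfd : Differentiable ℝ f := hfs.differentiable (by simp)
  have hgd : Differentiable ℝ g := hgs.differentiable (by simp)
  -- first-order links
  have dP1 : ∀ τ θ : ℝ, deriv (fun s => P s θ) τ = pd1 f (τ, θ) := fun τ θ =>
    HasDerivAt.deriv (show HasDerivAt (fun s => P s θ) (pd1 f (τ, θ)) τ from
      pd1_hasDerivAt f hfd τ θ)
  have dP2 : ∀ τ θ : ℝ, deriv (P τ) θ = pd2 f (τ, θ) := fun τ θ =>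
    HasDerivAt.deriv (show HasDerivAt (P τ) (pd2 f (τ, θ)) θ from pd2_hasDerivAt f hfd τ θ)
  have dQ1 : ∀ τ θ : ℝ, deriv (fun s => Q s θ) τ = pd1 g (τ, θ) := fun τ θ =>
    HasDerivAt.deriv (show HasDerivAt (fun s => Q s θ) (pd1 g (τ, θ)) τ from
      pd1_hasDerivAt g hgd τ θ)
  have dQ2 : ∀ τ θ : ℝ, deriv (Q τ) θ = pd2 g (τ, θ) := fun τ θ =>
    HasDerivAt.deriv (show HasDerivAt (Q τ) (pd2 g (τ, θ)) θ from pd2_hasDerivAt g hgd τ θ)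
  -- second-order links
  have dP11 : ∀ τ θ : ℝ, deriv (fun s => deriv (fun s' => P s' θ) s) τ
      = pd1 (pd1 f) (τ, θ) := by
    intro τ θ
    have e : (fun s => deriv (fun s' => P s' θ) s) = fun s => pd1 f (s, θ) :=
      funext fun s => dP1 s θ
    rw [e]
    exact (pd1_hasDerivAt (pd1 f) ((pd1_contDiff f hfs).differentiable (by simp)) τ θ).deriv
  have dP22 : ∀ τ θ : ℝ, deriv (deriv (P τ)) θ = pd2 (pd2 f) (τ, θ) := by
    intro τ θ
    have e : deriv (P τ) = fun t => pd2 f (τ, t) := funext fun t => dP2 τ t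
    rw [e]
    exact (pd2_hasDerivAt (pd2 f) ((pd2_contDiff f hfs).differentiable (by simp)) τ θ).deriv
  have dQ11 : ∀ τ θ : ℝ, deriv (fun s => deriv (fun s' => Q s' θ) s) τ
      = pd1 (pd1 g) (τ, θ) := by
    intro τ θ
    have e : (fun s => deriv (fun s' => Q s' θ) s) = fun s => pd1 g (s, θ) :=
      funext fun s => dQ1 s θ
    rw [e]
    exact (pd1_hasDerivAt (pd1 g) ((pd1_contDiff g hgs).differentiable (by simp)) τ θ).deriv
  have dQ22 : ∀ τ θ : ℝ, deriv (deriv (Q τ)) θ = pd2 (pd2 g) (τ, θ) := by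
    intro τ θ
    have e : deriv (Q τ) = fun t => pd2 g (τ, t) := funext fun t => dQ2 τ t
    rw [e]
    exact (pd2_hasDerivAt (pd2 g) ((pd2_contDiff g hgs).differentiable (by simp)) τ θ).deriv
  -- wave equations in pd form
  have hfw : ∀ p : ℝ × ℝ, pd1 (pd1 f) p = Real.exp (-2 * p.1) * pd2 (pd2 f) p
      + Real.exp (2 * f p) * (pd1 g p ^ 2 - Real.exp (-2 * p.1) * pd2 g p ^ 2) := by
    rintro ⟨τ, θ⟩
    have h := hPwave τ θ
    rw [dP11, dP22, dQ1, dQ2] at h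
    exact h
  have hgw : ∀ p : ℝ × ℝ, pd1 (pd1 g) p = Real.exp (-2 * p.1) * pd2 (pd2 g) p
      - 2 * (pd1 f p * pd1 g p - Real.exp (-2 * p.1) * pd2 f p * pd2 g p) := by
    rintro ⟨τ, θ⟩
    have h := hQwave τ θ
    rw [dQ11, dQ22, dP1, dQ1, dP2, dQ2] at h
    exact h
  have hAB : ∀ p : ℝ × ℝ, AA f g p = BB f g p := AA_eq_BB f g hfs hgs hfw hgw
  -- periodicity
  have pf0 : ∀ s : ℝ, f (s, 2 * π) = f (s, 0) := by
    intro s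
    show P s (2 * π) = P s 0
    simpa using hPper s 0
  have pg0 : ∀ s : ℝ, g (s, 2 * π) = g (s, 0) := by
    intro s
    show Q s (2 * π) = Q s 0
    simpa using hQper s 0
  have pf1 : ∀ s : ℝ, pd1 f (s, 2 * π) = pd1 f (s, 0) := by
    intro s
    rw [← dP1 s (2 * π), ← dP1 s 0]
    have e : (fun s' => P s' (2 * π)) = fun s' => P s' 0 :=
      funext fun s' => by simpa using hPper s' 0
    rw [e]
  have pg1 : ∀ s : ℝ, pd1 g (s, 2 * π) = pd1 g (s, 0) := by
    intro s
    rw [← dQ1 s (2 * π), ← dQ1 s 0]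
    have e : (fun s' => Q s' (2 * π)) = fun s' => Q s' 0 :=
      funext fun s' => by simpa using hQper s' 0
    rw [e]
  have pf2 : ∀ s : ℝ, pd2 f (s, 2 * π) = pd2 f (s, 0) := by
    intro s
    rw [← dP2 s (2 * π), ← dP2 s 0]
    have e : (fun t => P s (t + 2 * π)) = P s := funext fun t => hPper s t
    calc deriv (P s) (2 * π) = deriv (fun t => P s (t + 2 * π)) 0 := by
          rw [deriv_comp_add_const]; norm_num
      _ = deriv (P s) 0 := by rw [e]
  have pg2 : ∀ s : ℝ, pd2 g (s, 2 * π) = pd2 g (s, 0) := by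
    intro s
    rw [← dQ2 s (2 * π), ← dQ2 s 0]
    have e : (fun t => Q s (t + 2 * π)) = Q s := funext fun t => hQper s t
    calc deriv (Q s) (2 * π) = deriv (fun t => Q s (t + 2 * π)) 0 := by
          rw [deriv_comp_add_const]; norm_num
      _ = deriv (Q s) 0 := by rw [e]
  have hFFper : ∀ s : ℝ, FF f g (s, 2 * π) = FF f g (s, 0) := by
    intro s
    simp only [FF, pf0, pf1, pf2, pg0, pg1, pg2]
  -- J as an integral of GG
  have hJeq : J = fun τ => ∫ θ in (0:ℝ)..(2 * π), GG f g (τ, θ) := by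
    funext τ
    rw [hJ τ]
    refine intervalIntegral.integral_congr fun θ _ => ?_
    rw [dP1, dP2, dQ1, dQ2]
    rfl
  -- continuity
  have hGGc : Continuous (GG f g) := (GG_contDiff f g hfs hgs).continuous
  have hAAc : Continuous (AA f g) := (AA_contDiff f g hfs hgs).continuous
  have hBBc : Continuous (BB f g) := (BB_contDiff f g hfs hgs).continuous
  -- derivative of J vanishes
  have hJ0 : ∀ x₀ : ℝ, HasDerivAt J 0 x₀ := by
    intro x₀
    obtain ⟨C, hC⟩ := IsCompact.exists_bound_of_continuousOn
      ((isCompact_closedBall x₀ 1).prod (isCompact_uIcc (a := (0:ℝ)) (b := 2 * π)))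
      hAAc.continuousOn
    have main := intervalIntegral.hasDerivAt_integral_of_dominated_loc_of_deriv_le
      (F := fun x θ => GG f g (x, θ)) (F' := fun x θ => AA f g (x, θ))
      (a := 0) (b := 2 * π) (x₀ := x₀) (bound := fun _ => C) (s := Metric.ball x₀ 1) (μ := MeasureTheory.volume) (Metric.ball_mem_nhds x₀ one_pos)
      (Filter.Eventually.of_forall fun x =>
        (hGGc.comp (Continuous.prodMk_right x)).aestronglyMeasurable)
      ((hGGc.comp (Continuous.prodMk_right x₀)).intervalIntegrable 0 (2 * π))
      ((hAAc.comp (Continuous.prodMk_right x₀)).aestronglyMeasurable)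
      (Filter.Eventually.of_forall fun t ht x hx =>
        hC (x, t) ⟨Metric.ball_subset_closedBall hx, Set.uIoc_subset_uIcc ht⟩)
      (intervalIntegrable_const)
      (Filter.Eventually.of_forall fun t ht x hx => GG_deriv1 f g hfs hgs x t)
    have h2 : HasDerivAt (fun τ => ∫ θ in (0:ℝ)..(2 * π), GG f g (τ, θ))
        (∫ θ in (0:ℝ)..(2 * π), AA f g (x₀, θ)) x₀ := main.2
    have hz : (∫ θ in (0:ℝ)..(2 * π), AA f g (x₀, θ)) = 0 := by
      have e : (∫ θ in (0:ℝ)..(2 * π), AA f g (x₀, θ))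
          = ∫ θ in (0:ℝ)..(2 * π), BB f g (x₀, θ) :=
        intervalIntegral.integral_congr fun θ _ => hAB (x₀, θ)
      rw [e, intervalIntegral.integral_eq_sub_of_hasDerivAt
        (fun t _ => FF_deriv2 f g hfs hgs x₀ t)
        ((hBBc.comp (Continuous.prodMk_right x₀)).intervalIntegrable 0 (2 * π)),
        hFFper x₀, sub_self]
    rw [hz] at h2
    rw [hJeq]
    exact h2
  have hconst : ∀ τ₁ τ₂ : ℝ, J τ₁ = J τ₂ := fun τ₁ τ₂ =>
    is_const_of_deriv_eq_zero (fun x => (hJ0 x).differentiableAt)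
      (fun x => (hJ0 x).deriv) τ₁ τ₂
  exact ⟨hconst, fun h0 τ => (hconst τ 0).trans h0⟩
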